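/- Let t > 0, x < c be fixed reals and let μ₊ ∈ ℝ be fixed, and let q(t,x,w) = (1/√(2π t)) e^{-(w-x)²/(2t)} be the Gaussian heat kernel. Then lim_{h↓0} (1/h) ∫_0^{h^{1/4}} y [1 - Φ(-μ₊ h^{1/2} + y h^{-1/2}) + e^{2μ₊ y} Φ(-μ₊ h^{1/2} - y h^{-1/2})] q(t,x,c-y) dy = (1/(2√(2π t))) e^{-(c-x)²/(2t)}. -/

import Mathlib

open MeasureTheory Filter

/-- Standard normal cumulative distribution function. -/
noncomputable def Phi (y : ℝ) : ℝ :=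
  ∫ z in Set.Iic y, Real.exp (-z ^ 2 / 2) / Real.sqrt (2 * Real.pi)

noncomputable def phi (z : ℝ) : ℝ := Real.exp (-z ^ 2 / 2) / Real.sqrt (2 * Real.pi)

noncomputable def Kc : ℝ := Real.exp (1/2) / Real.sqrt (2 * Real.pi)

lemma sqrt2pi_pos : 0 < Real.sqrt (2 * Real.pi) :=
  Real.sqrt_pos.2 (by positivity)

lemma phi_nonneg (z : ℝ) : 0 ≤ phi z := by
  unfold phi; positivity

@[fun_prop]
lemma continuous_phi : Continuous phi := by
  unfold phi; fun_prop

lemma phi_eq (z : ℝ) : phi z = Real.exp (-(2⁻¹) * z ^ 2) / Real.sqrt (2 * Real.pi) := by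
  unfold phi; congr 2; ring

lemma integrable_phi : MeasureTheory.Integrable phi := by
  have : Integrable (fun z : ℝ => Real.exp (-(2⁻¹) * z ^ 2)) :=
    integrable_exp_neg_mul_sq (by norm_num)
  exact (this.div_const _).congr (Filter.Eventually.of_forall fun z => (phi_eq z).symm)

lemma integral_phi : ∫ z : ℝ, phi z = 1 := by
  simp_rw [phi_eq, integral_div, integral_gaussian]
  rw [div_eq_one_iff_eq (ne_of_gt sqrt2pi_pos)]
  norm_num
  exact mul_comm _ _

lemma phi_le_exp (z : ℝ) : phi z ≤ Kc * Real.exp z := by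
  unfold phi Kc
  rw [div_mul_eq_mul_div, ← Real.exp_add]
  gcongr
  nlinarith [sq_nonneg (z+1)]

lemma phi_le_exp_neg (z : ℝ) : phi z ≤ Kc * Real.exp (-z) := by
  unfold phi Kc
  rw [div_mul_eq_mul_div, ← Real.exp_add]
  gcongr
  nlinarith [sq_nonneg (z-1)]

lemma Phi_eq (y : ℝ) : Phi y = ∫ z in Set.Iic y, phi z := rfl

lemma Phi_nonneg (y : ℝ) : 0 ≤ Phi y := by
  rw [Phi_eq]
  exact setIntegral_nonneg measurableSet_Iic fun z _ => phi_nonneg z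

lemma one_sub_Phi (y : ℝ) : 1 - Phi y = ∫ z in Set.Ioi y, phi z := by
  have h := intervalIntegral.integral_Iic_add_Ioi (b := y) (f := phi) (μ := volume)
    integrable_phi.integrableOn integrable_phi.integrableOn
  rw [integral_phi] at h
  rw [Phi_eq]; linarith

lemma Phi_le_one (y : ℝ) : Phi y ≤ 1 := by
  have h := one_sub_Phi y
  have : 0 ≤ ∫ z in Set.Ioi y, phi z :=
    setIntegral_nonneg measurableSet_Ioi fun z _ => phi_nonneg z
  linarith

lemma Phi_le (y : ℝ) : Phi y ≤ Kc * Real.exp y := by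
  rw [Phi_eq]
  have h1 : IntegrableOn (fun z => Kc * Real.exp z) (Set.Iic y) := by
    apply Integrable.const_mul
    exact integrableOn_exp_Iic y
  calc (∫ z in Set.Iic y, phi z) ≤ ∫ z in Set.Iic y, Kc * Real.exp z :=
        setIntegral_mono_on integrable_phi.integrableOn h1 measurableSet_Iic
          (fun z _ => phi_le_exp z)
    _ = Kc * Real.exp y := by rw [MeasureTheory.integral_const_mul, integral_exp_Iic]

lemma one_sub_Phi_le (y : ℝ) : 1 - Phi y ≤ Kc * Real.exp (-y) := by
  rw [one_sub_Phi]
  have h1 : IntegrableOn (fun z => Kc * Real.exp (-z)) (Set.Ioi y) := by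
    apply Integrable.const_mul
    have := exp_neg_integrableOn_Ioi y (b := 1) one_pos
    exact (by simpa using this : IntegrableOn (fun x => Real.exp (-x)) (Set.Ioi y))
  calc (∫ z in Set.Ioi y, phi z) ≤ ∫ z in Set.Ioi y, Kc * Real.exp (-z) :=
        setIntegral_mono_on integrable_phi.integrableOn h1 measurableSet_Ioi
          (fun z _ => phi_le_exp_neg z)
    _ = Kc * Real.exp (-y) := by rw [MeasureTheory.integral_const_mul, integral_exp_neg_Ioi]

lemma Phi_neg (y : ℝ) : Phi (-y) = 1 - Phi y := by
  rw [one_sub_Phi, Phi_eq, ← integral_comp_neg_Ioi]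
  apply setIntegral_congr_fun measurableSet_Ioi
  intro z _
  unfold phi
  simp

lemma hasDerivAt_Phi (y : ℝ) : HasDerivAt Phi (phi y) y := by
  have key : ∀ u : ℝ, Phi u = Phi 0 + ∫ z in (0:ℝ)..u, phi z := by
    intro u
    have := intervalIntegral.integral_Iic_sub_Iic (μ := volume) (f := phi) (a := (0:ℝ)) (b := u)
      integrable_phi.integrableOn integrable_phi.integrableOn
    rw [Phi_eq, Phi_eq]
    linarith [this]
  have h2 : HasDerivAt (fun u => Phi 0 + ∫ z in (0:ℝ)..u, phi z) (phi y) y := by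
    apply HasDerivAt.const_add
    exact intervalIntegral.integral_hasDerivAt_right
      (integrable_phi.intervalIntegrable)
      (continuous_phi.stronglyMeasurable.stronglyMeasurableAtFilter)
      continuous_phi.continuousAt
  exact h2.congr_of_eventuallyEq (Filter.Eventually.of_forall key)

@[fun_prop]
lemma continuous_Phi : Continuous Phi :=
  continuous_iff_continuousAt.2 fun y => (hasDerivAt_Phi y).continuousAt

-- integrability helpers
lemma integrableOn_exp_half : IntegrableOn (fun u : ℝ => Real.exp (-(2⁻¹) * u)) (Set.Ioi 0) :=
  exp_neg_integrableOn_Ioi 0 (by norm_num)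

lemma sq_le_exp_half (u : ℝ) (hu : 0 ≤ u) : u ^ 2 ≤ 16 * Real.exp (2⁻¹ * u) := by
  have h1 := Real.add_one_le_exp (u / 4)
  have h2 : Real.exp (2⁻¹ * u) = Real.exp (u / 4) * Real.exp (u / 4) := by
    rw [← Real.exp_add]; ring_nf
  nlinarith [Real.exp_pos (u/4)]

lemma mul_exp_le (u : ℝ) (hu : 0 ≤ u) : u * Real.exp (-u) ≤ 2 * Real.exp (-(2⁻¹) * u) := by
  have h1 := Real.add_one_le_exp (u / 2)
  have h2 : Real.exp (-u) = Real.exp (-(2⁻¹) * u) / Real.exp (u / 2) := by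
    rw [← Real.exp_sub]; ring_nf
  rw [h2]
  rw [← mul_div_assoc, div_le_iff₀ (Real.exp_pos _)]
  have h3 : 0 < Real.exp (-2⁻¹ * u) := Real.exp_pos _
  nlinarith

lemma integrableOn_mul_exp : IntegrableOn (fun u : ℝ => u * Real.exp (-u)) (Set.Ioi 0) := by
  apply Integrable.mono' (integrableOn_exp_half.const_mul 2)
  · apply Continuous.aestronglyMeasurable; fun_prop
  · rw [ae_restrict_iff' measurableSet_Ioi]
    filter_upwards with u hu
    rw [Real.norm_eq_abs, abs_of_nonneg (mul_nonneg hu.le (Real.exp_pos _).le)]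
    exact mul_exp_le u (le_of_lt hu)

lemma sq_mul_exp_le (u : ℝ) (hu : 0 ≤ u) :
    u ^ 2 * Real.exp (-u) ≤ 16 * Real.exp (-(2⁻¹) * u) := by
  have h1 := sq_le_exp_half u hu
  have h2 : Real.exp (-(2⁻¹) * u) = Real.exp (2⁻¹ * u) * Real.exp (-u) := by
    rw [← Real.exp_add]; ring_nf
  rw [h2, ← mul_assoc]
  exact mul_le_mul_of_nonneg_right h1 (Real.exp_pos _).le

lemma integrableOn_sq_mul_exp : IntegrableOn (fun u : ℝ => u ^ 2 * Real.exp (-u)) (Set.Ioi 0) := by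
  apply Integrable.mono' (integrableOn_exp_half.const_mul 16)
  · apply Continuous.aestronglyMeasurable; fun_prop
  · rw [ae_restrict_iff' measurableSet_Ioi]
    filter_upwards with u hu
    rw [Real.norm_eq_abs, abs_of_nonneg (mul_nonneg (sq_nonneg u) (Real.exp_pos _).le)]
    exact sq_mul_exp_le u hu.le

lemma integrableOn_u_Phi_neg : IntegrableOn (fun u : ℝ => u * Phi (-u)) (Set.Ioi 0) := by
  apply Integrable.mono' (integrableOn_mul_exp.const_mul Kc)
  · apply Continuous.aestronglyMeasurable; fun_prop
  · rw [ae_restrict_iff' measurableSet_Ioi]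
    filter_upwards with u hu
    rw [Real.norm_eq_abs, abs_of_nonneg (mul_nonneg hu.le (Phi_nonneg _))]
    have h1 : Phi (-u) ≤ Kc * Real.exp (-u) := Phi_le (-u)
    calc u * Phi (-u) ≤ u * (Kc * Real.exp (-u)) :=
          mul_le_mul_of_nonneg_left h1 hu.le
      _ = Kc * (u * Real.exp (-u)) := by ring

lemma integrableOn_sq_phi : IntegrableOn (fun u : ℝ => u ^ 2 / 2 * phi u) (Set.Ioi 0) := by
  apply Integrable.mono' (integrableOn_sq_mul_exp.const_mul (Kc / 2))
  · apply Continuous.aestronglyMeasurable; fun_prop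
  · rw [ae_restrict_iff' measurableSet_Ioi]
    filter_upwards with u hu
    rw [Real.norm_eq_abs, abs_of_nonneg (mul_nonneg (by positivity) (phi_nonneg _))]
    have h1 : phi u ≤ Kc * Real.exp (-u) := phi_le_exp_neg u
    calc u ^ 2 / 2 * phi u ≤ u ^ 2 / 2 * (Kc * Real.exp (-u)) :=
          mul_le_mul_of_nonneg_left h1 (by positivity)
      _ = Kc / 2 * (u ^ 2 * Real.exp (-u)) := by ring

lemma integrableOn_exp_sq : IntegrableOn (fun u : ℝ => Real.exp (-u ^ 2 / 2)) (Set.Ioi 0) := by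
  have : Integrable (fun u : ℝ => Real.exp (-(2⁻¹) * u ^ 2)) :=
    integrable_exp_neg_mul_sq (by norm_num)
  exact (this.integrableOn).congr_fun (fun u _ => by norm_num [neg_div]; ring_nf) measurableSet_Ioi

lemma integrableOn_sq_exp_sq :
    IntegrableOn (fun u : ℝ => u ^ 2 * Real.exp (-u ^ 2 / 2)) (Set.Ioi 0) := by
  apply Integrable.mono' (integrableOn_sq_mul_exp.const_mul (Real.exp (1/2)))
  · apply Continuous.aestronglyMeasurable; fun_prop
  · rw [ae_restrict_iff' measurableSet_Ioi]
    filter_upwards with u hu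
    rw [Real.norm_eq_abs, abs_of_nonneg (mul_nonneg (sq_nonneg _) (Real.exp_pos _).le)]
    have h1 : Real.exp (-u ^ 2 / 2) ≤ Real.exp (1/2) * Real.exp (-u) := by
      rw [← Real.exp_add]
      exact Real.exp_le_exp.2 (by nlinarith [sq_nonneg (u - 1)])
    calc u ^ 2 * Real.exp (-u ^ 2 / 2) ≤ u ^ 2 * (Real.exp (1/2) * Real.exp (-u)) :=
          mul_le_mul_of_nonneg_left h1 (sq_nonneg u)
      _ = Real.exp (1/2) * (u ^ 2 * Real.exp (-u)) := by ring

lemma integral_sq_exp_sq :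
    ∫ u in Set.Ioi (0:ℝ), u ^ 2 * Real.exp (-u ^ 2 / 2) = Real.sqrt (2 * Real.pi) / 2 := by
  have hint : IntegrableOn (fun u : ℝ => u ^ 2 * Real.exp (-u ^ 2 / 2) - Real.exp (-u ^ 2 / 2))
      (Set.Ioi 0) := integrableOn_sq_exp_sq.sub integrableOn_exp_sq
  have hderiv : ∀ u : ℝ, HasDerivAt (fun v : ℝ => -v * Real.exp (-v ^ 2 / 2))
      (u ^ 2 * Real.exp (-u ^ 2 / 2) - Real.exp (-u ^ 2 / 2)) u := by
    intro u
    have h1 : HasDerivAt (fun v : ℝ => -v ^ 2 / 2) (-u) u := by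
      have := ((hasDerivAt_pow 2 u).neg).div_const 2
      simpa using this.congr_deriv (by ring)
    have h2 : HasDerivAt (fun v : ℝ => Real.exp (-v ^ 2 / 2)) (Real.exp (-u ^ 2 / 2) * -u) u :=
      (Real.hasDerivAt_exp _).comp u h1
    have h3 := (hasDerivAt_neg u).mul h2
    exact h3.congr_deriv (by ring)
  have hFTC : ∀ R : ℝ, (∫ u in (0:ℝ)..R, (u ^ 2 * Real.exp (-u ^ 2 / 2) - Real.exp (-u ^ 2 / 2)))
      = -R * Real.exp (-R ^ 2 / 2) := by
    intro R
    rw [intervalIntegral.integral_eq_sub_of_hasDerivAt (fun u _ => hderiv u)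
      ((Continuous.intervalIntegrable (by fun_prop) _ _))]
    simp
  have hlim1 : Tendsto (fun R : ℝ => ∫ u in (0:ℝ)..R,
      (u ^ 2 * Real.exp (-u ^ 2 / 2) - Real.exp (-u ^ 2 / 2))) atTop
      (nhds (∫ u in Set.Ioi (0:ℝ), (u ^ 2 * Real.exp (-u ^ 2 / 2) - Real.exp (-u ^ 2 / 2)))) :=
    intervalIntegral_tendsto_integral_Ioi 0 hint tendsto_id
  have hlim2 : Tendsto (fun R : ℝ => -R * Real.exp (-R ^ 2 / 2)) atTop (nhds 0) := by
    have hb : Tendsto (fun R : ℝ => R * Real.exp (-R)) atTop (nhds 0) := by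
      simpa using Real.tendsto_pow_mul_exp_neg_atTop_nhds_zero 1
    have hb2 : Tendsto (fun R : ℝ => -(Real.exp (1/2) * (R * Real.exp (-R)))) atTop (nhds 0) := by
      simpa using (hb.const_mul (Real.exp (1/2))).neg
    apply tendsto_of_tendsto_of_tendsto_of_le_of_le' hb2 tendsto_const_nhds
    · filter_upwards [eventually_ge_atTop (0:ℝ)] with R hR
      have h1 : Real.exp (-R ^ 2 / 2) ≤ Real.exp (1/2) * Real.exp (-R) := by
        rw [← Real.exp_add]
        exact Real.exp_le_exp.2 (by nlinarith [sq_nonneg (R - 1)])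
      nlinarith [Real.exp_pos (-R^2/2), Real.exp_pos (-R)]
    · filter_upwards [eventually_ge_atTop (0:ℝ)] with R hR
      nlinarith [Real.exp_pos (-R^2/2)]
  have heq : (∫ u in Set.Ioi (0:ℝ), (u ^ 2 * Real.exp (-u ^ 2 / 2) - Real.exp (-u ^ 2 / 2))) = 0 :=
    tendsto_nhds_unique (hlim1.congr fun R => (hFTC R).symm ▸ rfl) hlim2
  rw [integral_sub integrableOn_sq_exp_sq integrableOn_exp_sq, sub_eq_zero] at heq
  rw [heq]
  have hg := integral_gaussian_Ioi (2⁻¹ : ℝ)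
  have : (∫ u in Set.Ioi (0:ℝ), Real.exp (-u ^ 2 / 2))
      = ∫ u in Set.Ioi (0:ℝ), Real.exp (-(2⁻¹:ℝ) * u ^ 2) := by
    apply setIntegral_congr_fun measurableSet_Ioi
    intro u _
    norm_num [neg_div]
    ring_nf
  rw [this, hg]
  rw [show (Real.pi / 2⁻¹) = 2 * Real.pi by ring]

lemma integral_sq_phi : ∫ u in Set.Ioi (0:ℝ), u ^ 2 / 2 * phi u = 4⁻¹ := by
  have : ∀ u : ℝ, u ^ 2 / 2 * phi u
      = (u ^ 2 * Real.exp (-u ^ 2 / 2)) / (2 * Real.sqrt (2 * Real.pi)) := by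
    intro u; unfold phi; field_simp
  simp_rw [this, integral_div, integral_sq_exp_sq]
  rw [div_eq_iff (by positivity : (2 * Real.sqrt (2*Real.pi)) ≠ 0)] at *
  rw [div_eq_iff (by positivity : (2:ℝ) ≠ 0)]
  ring

lemma integral_u_Phi_neg : ∫ u in Set.Ioi (0:ℝ), u * Phi (-u) = 4⁻¹ := by
  have hint : IntegrableOn (fun u : ℝ => u * Phi (-u) - u ^ 2 / 2 * phi u) (Set.Ioi 0) :=
    integrableOn_u_Phi_neg.sub integrableOn_sq_phi
  have hderiv : ∀ u : ℝ, HasDerivAt (fun v : ℝ => v ^ 2 / 2 * Phi (-v))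
      (u * Phi (-u) - u ^ 2 / 2 * phi u) u := by
    intro u
    have h1 : HasDerivAt (fun v : ℝ => v ^ 2 / 2) u u := by
      have := (hasDerivAt_pow 2 u).div_const 2
      simpa using this.congr_deriv (by ring)
    have h2 : HasDerivAt (fun v : ℝ => Phi (-v)) (-phi (-u)) u := by
      have := (hasDerivAt_Phi (-u)).comp u (hasDerivAt_neg u)
      exact (by simpa using this : HasDerivAt (Phi ∘ Neg.neg) (-phi (-u)) u)
    have h3 := h1.mul h2
    have : phi (-u) = phi u := by unfold phi; simp
    exact h3.congr_deriv (by rw [this]; ring)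
  have hFTC : ∀ R : ℝ, (∫ u in (0:ℝ)..R, (u * Phi (-u) - u ^ 2 / 2 * phi u))
      = R ^ 2 / 2 * Phi (-R) := by
    intro R
    rw [intervalIntegral.integral_eq_sub_of_hasDerivAt (fun u _ => hderiv u)
      ((Continuous.intervalIntegrable (by fun_prop) _ _))]
    simp
  have hlim1 : Tendsto (fun R : ℝ => ∫ u in (0:ℝ)..R, (u * Phi (-u) - u ^ 2 / 2 * phi u)) atTop
      (nhds (∫ u in Set.Ioi (0:ℝ), (u * Phi (-u) - u ^ 2 / 2 * phi u))) :=
    intervalIntegral_tendsto_integral_Ioi 0 hint tendsto_id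
  have hlim2 : Tendsto (fun R : ℝ => R ^ 2 / 2 * Phi (-R)) atTop (nhds 0) := by
    have hb : Tendsto (fun R : ℝ => R ^ 2 * Real.exp (-R)) atTop (nhds 0) := by
      simpa using Real.tendsto_pow_mul_exp_neg_atTop_nhds_zero 2
    have hb2 : Tendsto (fun R : ℝ => Kc / 2 * (R ^ 2 * Real.exp (-R))) atTop (nhds 0) := by
      simpa using hb.const_mul (Kc / 2)
    apply tendsto_of_tendsto_of_tendsto_of_le_of_le' tendsto_const_nhds hb2
    · filter_upwards with R
      exact mul_nonneg (by positivity) (Phi_nonneg _)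
    · filter_upwards [eventually_ge_atTop (0:ℝ)] with R hR
      have h1 : Phi (-R) ≤ Kc * Real.exp (-R) := Phi_le (-R)
      calc R ^ 2 / 2 * Phi (-R) ≤ R ^ 2 / 2 * (Kc * Real.exp (-R)) :=
            mul_le_mul_of_nonneg_left h1 (by positivity)
        _ = Kc / 2 * (R ^ 2 * Real.exp (-R)) := by ring
  have heq : (∫ u in Set.Ioi (0:ℝ), (u * Phi (-u) - u ^ 2 / 2 * phi u)) = 0 :=
    tendsto_nhds_unique (hlim1.congr fun R => (hFTC R).symm ▸ rfl) hlim2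
  rw [integral_sub integrableOn_u_Phi_neg integrableOn_sq_phi, sub_eq_zero] at heq
  rw [heq, integral_sq_phi]

theorem stmt6 (t x c μp : ℝ) (ht : 0 < t) (hx : x < c) :
    Tendsto (fun h : ℝ => (1 / h) *
        ∫ y in Set.Ioc (0:ℝ) (h ^ ((1:ℝ)/4)),
          y * (1 - Phi (-μp * Real.sqrt h + y / Real.sqrt h)
            + Real.exp (2 * μp * y) * Phi (-μp * Real.sqrt h - y / Real.sqrt h))
          * (Real.exp (-((c - y) - x) ^ 2 / (2 * t)) / Real.sqrt (2 * Real.pi * t)))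
      (nhdsWithin 0 (Set.Ioi 0))
      (nhds (Real.exp (-(c - x) ^ 2 / (2 * t)) / (2 * Real.sqrt (2 * Real.pi * t)))) := by
  have hs0 : 0 < Real.sqrt (2 * Real.pi * t) := Real.sqrt_pos.2 (by positivity)
  set s : ℝ := Real.sqrt (2 * Real.pi * t) with hs
  set q0 : ℝ := Real.exp (-(c - x) ^ 2 / (2 * t)) / s with hq0
  set G : ℝ → ℝ → ℝ := fun h u =>
    u * (1 - Phi (-μp * Real.sqrt h + u)
      + Real.exp (2 * μp * (Real.sqrt h * u)) * Phi (-μp * Real.sqrt h - u))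
    * (Real.exp (-((c - Real.sqrt h * u) - x) ^ 2 / (2 * t)) / s) with hG
  set F : ℝ → ℝ → ℝ := fun h => Set.indicator (Set.Ioc 0 (h ^ (-(1:ℝ)/4))) (G h) with hF
  set flim : ℝ → ℝ := fun u => u * (2 * Phi (-u)) * q0 with hflim
  -- continuity of G h
  have hGcont : ∀ h : ℝ, Continuous (G h) := by
    intro h; rw [hG]; fun_prop
  -- Step A : substitution
  have stepA : ∀ h : ℝ, 0 < h → (1 / h) *
      (∫ y in Set.Ioc (0:ℝ) (h ^ ((1:ℝ)/4)),
          y * (1 - Phi (-μp * Real.sqrt h + y / Real.sqrt h)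
            + Real.exp (2 * μp * y) * Phi (-μp * Real.sqrt h - y / Real.sqrt h))
          * (Real.exp (-((c - y) - x) ^ 2 / (2 * t)) / s))
      = ∫ u in Set.Ioi (0:ℝ), F h u := by
    intro h hh
    have hsh : 0 < Real.sqrt h := Real.sqrt_pos.2 hh
    have hb2 : (0:ℝ) ≤ h ^ (-(1:ℝ)/4) := Real.rpow_nonneg hh.le _
    have hb1 : (0:ℝ) ≤ h ^ ((1:ℝ)/4) := Real.rpow_nonneg hh.le _
    have hmul : Real.sqrt h * h ^ (-(1:ℝ)/4) = h ^ ((1:ℝ)/4) := by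
      rw [Real.sqrt_eq_rpow, ← Real.rpow_add hh]
      norm_num
    set g : ℝ → ℝ := fun y =>
      y * (1 - Phi (-μp * Real.sqrt h + y / Real.sqrt h)
        + Real.exp (2 * μp * y) * Phi (-μp * Real.sqrt h - y / Real.sqrt h))
      * (Real.exp (-((c - y) - x) ^ 2 / (2 * t)) / s) with hg
    have hcomp : ∀ u : ℝ, g (Real.sqrt h * u) = Real.sqrt h * G h u := by
      intro u
      rw [hg, hG]
      simp only
      rw [mul_div_cancel_left₀ u (ne_of_gt hsh)]
      ring
    have e1 : (∫ u in Set.Ioi (0:ℝ), F h u) = ∫ u in (0:ℝ)..(h ^ (-(1:ℝ)/4)), G h u := by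
      rw [hF]
      simp only
      rw [setIntegral_indicator measurableSet_Ioc,
        Set.inter_eq_self_of_subset_right Set.Ioc_subset_Ioi_self,
        intervalIntegral.integral_of_le hb2]
    have e2 : (∫ y in Set.Ioc (0:ℝ) (h ^ ((1:ℝ)/4)), g y) = ∫ y in (0:ℝ)..(h ^ ((1:ℝ)/4)), g y :=
      (intervalIntegral.integral_of_le hb1).symm
    have e3 : (Real.sqrt h) • (∫ u in (0:ℝ)..(h ^ (-(1:ℝ)/4)), g (Real.sqrt h * u))
        = ∫ y in (0:ℝ)..(h ^ ((1:ℝ)/4)), g y := by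
      have := intervalIntegral.smul_integral_comp_mul_left (f := g) (a := (0:ℝ))
        (b := h ^ (-(1:ℝ)/4)) (Real.sqrt h)
      rwa [mul_zero, hmul] at this
    have e4 : (∫ u in (0:ℝ)..(h ^ (-(1:ℝ)/4)), g (Real.sqrt h * u))
        = Real.sqrt h * ∫ u in (0:ℝ)..(h ^ (-(1:ℝ)/4)), G h u := by
      rw [← intervalIntegral.integral_const_mul]
      exact intervalIntegral.integral_congr fun u _ => hcomp u
    rw [e2, ← e3, e4, e1]
    have hss : Real.sqrt h * Real.sqrt h = h := Real.mul_self_sqrt hh.le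
    rw [smul_eq_mul]
    have hone : Real.sqrt h * Real.sqrt h / h = 1 := by
      rw [hss]; exact div_self (ne_of_gt hh)
    linear_combination (∫ (u : ℝ) in (0:ℝ)..(h ^ (-(1:ℝ)/4)), G h u) * hone
  -- constants
  have hKc : 0 < Kc := by unfold Kc; positivity
  set C1 : ℝ := Kc * Real.exp |μp| * (1 + Real.exp (2 * |μp|)) / s with hC1
  have hC1pos : 0 < C1 := by positivity
  -- dominated convergence
  have hDCT : Tendsto (fun h : ℝ => ∫ u in Set.Ioi (0:ℝ), F h u) (nhdsWithin 0 (Set.Ioi 0))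
      (nhds (∫ u in Set.Ioi (0:ℝ), flim u)) := by
    apply tendsto_integral_filter_of_dominated_convergence
      (bound := fun u : ℝ => (2 * C1) * Real.exp (-(2⁻¹) * u))
    · filter_upwards with h
      exact ((hGcont h).aestronglyMeasurable).indicator measurableSet_Ioc
    · filter_upwards [Ioo_mem_nhdsGT_of_mem
        (⟨le_refl (0:ℝ), one_pos⟩ : (0:ℝ) ∈ Set.Ico (0:ℝ) 1)] with h hh
      filter_upwards with u
      obtain ⟨hh0, hh1⟩ := hh
      have hsh : 0 < Real.sqrt h := Real.sqrt_pos.2 hh0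
      have hsh1 : Real.sqrt h ≤ 1 := by
        rw [show (1:ℝ) = Real.sqrt 1 from (Real.sqrt_one).symm]
        exact Real.sqrt_le_sqrt hh1.le
      by_cases hu : u ∈ Set.Ioc (0:ℝ) (h ^ (-(1:ℝ)/4))
      · have hFeq : F h u = G h u := Set.indicator_of_mem hu (G h)
        obtain ⟨hu0, hub⟩ := hu
        have hshu1 : Real.sqrt h * u ≤ 1 := by
          have h1 : Real.sqrt h * u ≤ Real.sqrt h * (h ^ (-(1:ℝ)/4)) :=
            mul_le_mul_of_nonneg_left hub hsh.le
          have h2 : Real.sqrt h * h ^ (-(1:ℝ)/4) = h ^ ((1:ℝ)/4) := by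
            rw [Real.sqrt_eq_rpow, ← Real.rpow_add hh0]; norm_num
          rw [h2] at h1
          exact h1.trans (Real.rpow_le_one hh0.le hh1.le (by norm_num))
        have hshu0 : 0 ≤ Real.sqrt h * u := mul_nonneg hsh.le hu0.le
        set A1 : ℝ := 1 - Phi (-μp * Real.sqrt h + u) with hA1
        set A2 : ℝ := Real.exp (2 * μp * (Real.sqrt h * u)) * Phi (-μp * Real.sqrt h - u)
          with hA2
        have hmuabs : μp * Real.sqrt h ≤ |μp| := by
          calc μp * Real.sqrt h ≤ |μp| * Real.sqrt h :=
                mul_le_mul_of_nonneg_right (le_abs_self μp) hsh.le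
            _ ≤ |μp| * 1 := mul_le_mul_of_nonneg_left hsh1 (abs_nonneg μp)
            _ = |μp| := mul_one _
        have hA1nn : 0 ≤ A1 := by rw [hA1]; linarith [Phi_le_one (-μp * Real.sqrt h + u)]
        have hA1le : A1 ≤ Kc * Real.exp |μp| * Real.exp (-u) := by
          rw [hA1]
          calc 1 - Phi (-μp * Real.sqrt h + u)
              ≤ Kc * Real.exp (-(-μp * Real.sqrt h + u)) := one_sub_Phi_le _
            _ = Kc * (Real.exp (μp * Real.sqrt h) * Real.exp (-u)) := by
                rw [← Real.exp_add]; ring_nf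
            _ ≤ Kc * (Real.exp |μp| * Real.exp (-u)) := by
                have := Real.exp_le_exp.2 hmuabs
                gcongr
            _ = Kc * Real.exp |μp| * Real.exp (-u) := by ring
        have hA2nn : 0 ≤ A2 := mul_nonneg (Real.exp_pos _).le (Phi_nonneg _)
        have hA2le : A2 ≤ Real.exp (2 * |μp|) * (Kc * Real.exp |μp| * Real.exp (-u)) := by
          rw [hA2]
          have h1 : Real.exp (2 * μp * (Real.sqrt h * u)) ≤ Real.exp (2 * |μp|) := by
            apply Real.exp_le_exp.2
            calc 2 * μp * (Real.sqrt h * u) ≤ 2 * |μp| * (Real.sqrt h * u) := by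
                  apply mul_le_mul_of_nonneg_right ?_ hshu0
                  have := le_abs_self μp; linarith
              _ ≤ 2 * |μp| * 1 := by
                  apply mul_le_mul_of_nonneg_left hshu1 (by positivity)
              _ = 2 * |μp| := mul_one _
          have h2 : Phi (-μp * Real.sqrt h - u) ≤ Kc * Real.exp |μp| * Real.exp (-u) := by
            calc Phi (-μp * Real.sqrt h - u) ≤ Kc * Real.exp (-μp * Real.sqrt h - u) := Phi_le _
              _ = Kc * (Real.exp (-(μp * Real.sqrt h)) * Real.exp (-u)) := by
                  rw [← Real.exp_add]; ring_nf
              _ ≤ Kc * (Real.exp |μp| * Real.exp (-u)) := by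
                  have : Real.exp (-(μp * Real.sqrt h)) ≤ Real.exp |μp| := by
                    apply Real.exp_le_exp.2
                    have := neg_abs_le μp
                    nlinarith [hsh.le, hsh1, abs_nonneg μp]
                  gcongr
              _ = Kc * Real.exp |μp| * Real.exp (-u) := by ring
          exact mul_le_mul h1 h2 (Phi_nonneg _) (Real.exp_pos _).le
        have hqf0 : 0 ≤ Real.exp (-((c - Real.sqrt h * u) - x) ^ 2 / (2 * t)) / s :=
          div_nonneg (Real.exp_pos _).le hs0.le
        have hqf1 : Real.exp (-((c - Real.sqrt h * u) - x) ^ 2 / (2 * t)) / s ≤ 1 / s := by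
          gcongr
          exact Real.exp_le_one_iff.2
            (div_nonpos_of_nonpos_of_nonneg (neg_nonpos.2 (sq_nonneg _)) (by positivity))
        have hGeq : G h u = u * (A1 + A2)
            * (Real.exp (-((c - Real.sqrt h * u) - x) ^ 2 / (2 * t)) / s) := by
          rw [hA1, hA2]
        have hGnn : 0 ≤ G h u := by
          rw [hGeq]
          exact mul_nonneg (mul_nonneg hu0.le (by linarith)) hqf0
        rw [hFeq, Real.norm_eq_abs, abs_of_nonneg hGnn, hGeq]
        calc u * (A1 + A2) * (Real.exp (-((c - Real.sqrt h * u) - x) ^ 2 / (2 * t)) / s)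
            ≤ u * (A1 + A2) * (1 / s) := by
              apply mul_le_mul_of_nonneg_left hqf1 (mul_nonneg hu0.le (by linarith))
          _ ≤ u * ((Kc * Real.exp |μp| * Real.exp (-u))
                + Real.exp (2 * |μp|) * (Kc * Real.exp |μp| * Real.exp (-u))) * (1 / s) := by
              apply mul_le_mul_of_nonneg_right ?_ (by positivity)
              apply mul_le_mul_of_nonneg_left ?_ hu0.le
              exact add_le_add hA1le hA2le
          _ = C1 * (u * Real.exp (-u)) := by rw [hC1]; field_simp
          _ ≤ C1 * (2 * Real.exp (-(2⁻¹) * u)) :=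
              mul_le_mul_of_nonneg_left (mul_exp_le u hu0.le) hC1pos.le
          _ = 2 * C1 * Real.exp (-(2⁻¹) * u) := by ring
      · have hFeq : F h u = 0 := Set.indicator_of_notMem hu (G h)
        rw [hFeq, norm_zero]
        positivity
    · exact integrableOn_exp_half.const_mul (2 * C1)
    · rw [ae_restrict_iff' measurableSet_Ioi]
      filter_upwards with u hu
      have hu0 : (0:ℝ) < u := hu
      have hev : ∀ᶠ h : ℝ in nhdsWithin 0 (Set.Ioi 0), F h u = G h u := by
        have hpos : (0:ℝ) < min (u ^ (-4:ℝ)) 1 :=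
          lt_min (Real.rpow_pos_of_pos hu0 _) one_pos
        filter_upwards [Ioo_mem_nhdsGT_of_mem
          (⟨le_refl (0:ℝ), hpos⟩ : (0:ℝ) ∈ Set.Ico (0:ℝ) (min (u ^ (-4:ℝ)) 1))] with h hh
        obtain ⟨hh0, hhlt⟩ := hh
        have h1 : h ≤ u ^ (-4:ℝ) := (hhlt.trans_le (min_le_left _ _)).le
        have h2 := Real.rpow_le_rpow_of_nonpos hh0 h1 (by norm_num : (-(1:ℝ)/4) ≤ 0)
        have h3 : (u ^ (-4:ℝ)) ^ (-(1:ℝ)/4) = u := by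
          rw [← Real.rpow_mul hu0.le]; norm_num
        rw [h3] at h2
        show (Set.Ioc (0:ℝ) (h ^ (-(1:ℝ)/4))).indicator (G h) u = G h u
        exact Set.indicator_of_mem (Set.mem_Ioc.mpr ⟨hu0, h2⟩) (G h)
      have hsqrt : Tendsto Real.sqrt (nhdsWithin 0 (Set.Ioi 0)) (nhds 0) := by
        have h0 := (Real.continuous_sqrt.tendsto 0).mono_left
          (nhdsWithin_le_nhds (s := Set.Ioi (0:ℝ)))
        simpa using h0
      have hGt : Tendsto (fun h : ℝ => G h u) (nhdsWithin 0 (Set.Ioi 0)) (nhds (flim u)) := by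
        have hcont : Continuous (fun a : ℝ => u * (1 - Phi (-μp * a + u)
            + Real.exp (2 * μp * (a * u)) * Phi (-μp * a - u))
            * (Real.exp (-((c - a * u) - x) ^ 2 / (2 * t)) / s)) := by fun_prop
        have h4 := (hcont.tendsto 0).comp hsqrt
        have h5 : u * (1 - Phi (-μp * 0 + u)
            + Real.exp (2 * μp * (0 * u)) * Phi (-μp * 0 - u))
            * (Real.exp (-((c - 0 * u) - x) ^ 2 / (2 * t)) / s) = flim u := by
          rw [hflim, hq0]
          simp only [mul_zero, zero_mul, neg_zero, zero_add, zero_sub, sub_zero,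
            Real.exp_zero, one_mul]
          rw [show (1 : ℝ) - Phi u + Phi (-u) = 2 * Phi (-u) by rw [Phi_neg]; ring]
        rw [h5] at h4
        exact h4
      exact hGt.congr' (hev.mono fun h e => e.symm)
  -- final value
  have hval : (∫ u in Set.Ioi (0:ℝ), flim u) = q0 / 2 := by
    rw [hflim]
    have hpt : ∀ u : ℝ, u * (2 * Phi (-u)) * q0 = (2 * q0) * (u * Phi (-u)) := fun u => by ring
    simp_rw [hpt]
    rw [MeasureTheory.integral_const_mul, integral_u_Phi_neg]
    ring
  have hval2 : q0 / 2 = Real.exp (-(c - x) ^ 2 / (2 * t)) / (2 * s) := by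
    rw [hq0]; ring
  rw [hval, hval2] at hDCT
  apply hDCT.congr'
  filter_upwards [self_mem_nhdsWithin] with h hh
  exact (stepA h hh).symm
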